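/- Let C be an augmented ℤ_p-chain complex, let φ_j be a resolution of 1 for C, and let n ≥ 2 be even. Suppose there are cochains η ∈ C^n and b ∈ C^{n−1} such that δ(sη) = 0 and sφ_n − p·(sη) = δ(sb). Then the sequence φ̃_j defined by φ̃_j = φ_j for j < n−1, φ̃_{n−1} = φ_{n−1} − sb, φ̃_n = sη, and φ̃_j = 0 for all j > n, is a resolution of 1 for C. (Thus if the top Smith class, in even dimension n, is p-divisible, the resolution can be chosen with its n-th term of the form sη and all higher terms zero.) -/

import Mathlib

open scoped TensorProduct

/-- An augmented `ℤ_p`-chain complex: a `ℤ_p`-chain complex indexed by degrees `≥ −1`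
whose degree-`(−1)` chain group is infinite cyclic with a chosen generator `∅` fixed by
`t`.  Here `C n` is the chain group in degree `n − 1` (so `C 0` is the augmentation
degree, identified with `ℤ` by `base`, the generator `∅` corresponding to `1`). -/
structure AugComplex (p : ℕ) where
  C : ℕ → Type
  [acg : ∀ n, AddCommGroup (C n)]
  bd : ∀ n, C (n + 1) →+ C n
  bd_bd : ∀ n x, bd n (bd (n + 1) x) = 0
  t : ∀ n, C n →+ C n
  t_bd : ∀ n x, t n (bd n x) = bd n (t (n + 1) x)
  t_pow : ∀ n x, (⇑(t n))^[p] x = x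
  base : C 0 ≃+ ℤ
  t_base : ∀ x, t 0 x = x

attribute [instance] AugComplex.acg

namespace AugComplex

variable {p : ℕ} (X : AugComplex p)

/-- cochains: `Co n = Hom(C n, ℤ)` is the group of cochains in degree `n − 1`. -/
abbrev Co (n : ℕ) := X.C n →+ ℤ

/-- the chain map `t^k` -/
def tpow (n : ℕ) : ℕ → (X.C n →+ X.C n)
  | 0 => AddMonoidHom.id _
  | k + 1 => (X.t n).comp (tpow n k)

/-- `s = 1 + t + ⋯ + t^{p−1}` on chains -/
def sCh (n : ℕ) : X.C n →+ X.C n := ∑ k ∈ Finset.range p, X.tpow n k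

/-- `d = 1 − t` on chains -/
def dCh (n : ℕ) : X.C n →+ X.C n := AddMonoidHom.id _ - X.t n

/-- the coboundary `δφ = φ ∘ ∂` -/
def cb (n : ℕ) : X.Co n →+ X.Co (n + 1) where
  toFun φ := φ.comp (X.bd n)
  map_zero' := by ext x; simp
  map_add' _ _ := by ext x; simp

/-- the cochain map `t^k` -/
def tCo (n k : ℕ) : X.Co n →+ X.Co n where
  toFun φ := φ.comp (X.tpow n k)
  map_zero' := by ext x; simp
  map_add' _ _ := by ext x; simp

/-- `s = 1 + t + ⋯ + t^{p−1}` on cochains -/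
def sCo (n : ℕ) : X.Co n →+ X.Co n where
  toFun φ := φ.comp (X.sCh n)
  map_zero' := by ext x; simp
  map_add' _ _ := by ext x; simp

/-- `d = 1 − t` on cochains -/
def dCo (n : ℕ) : X.Co n →+ X.Co n where
  toFun φ := φ.comp (X.dCh n)
  map_zero' := by ext x; simp
  map_add' _ _ := by ext x; simp

/-- the cochain `1_C = δ(∅*) ∈ C^0` -/
def one : X.Co 1 := X.base.toAddMonoidHom.comp (X.bd 0)

/-- `φ_0, φ_1, φ_2, …` is a resolution of `1` for `X`:  `sφ_0 = 1`, `δφ_j = dφ_{j+1}`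
for even `j`, and `δφ_j = sφ_{j+1}` for odd `j`.  (Here `φ j : Co (j+1)` is the
cochain in degree `j`.) -/
def IsRes (φ : ∀ j : ℕ, X.Co (j + 1)) : Prop :=
  X.sCo 1 (φ 0) = X.one ∧
  (∀ j, Even j → X.cb (j + 1) (φ j) = X.dCo (j + 2) (φ (j + 1))) ∧
  (∀ j, Odd j → X.cb (j + 1) (φ j) = X.sCo (j + 2) (φ (j + 1)))

/-- transport of cochains along an equality of degrees -/
def castCoX {m n : ℕ} (h : m = n) (f : X.Co m) : X.Co n := h ▸ f

end AugComplex

/-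
Since `s` kills `d` and `s² = p·s`, only two relations of the new sequence differ from those
of `φ`: in degree `n − 2` the correction `sb` disappears under `d`, and in degree `n − 1`
one gets `δ(φ_{n−1} − sb) = sφ_n − δ(sb) = p·sη = s(sη)`. Above `n` everything is zero,
and `δ(sη) = 0 = d 0` closes the even relation in degree `n`.
-/

lemma Finset.sum_range_iterate_succ_of_iterate_eq {A : Type*} [AddCommMonoid A] (g : A → A)
    (x : A) (P : ℕ) (hg : g^[P] x = x) :
    ∑ k ∈ Finset.range P, g^[k + 1] x = ∑ k ∈ Finset.range P, g^[k] x := by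
  cases P with
  | zero => simp
  | succ q =>
    rw [Finset.sum_range_succ, Finset.sum_range_succ' (fun k => g^[k] x)]
    simp [hg]

namespace AugComplex

variable {p : ℕ} (X : AugComplex p)

lemma tpow_apply (m k : ℕ) (x : X.C m) : X.tpow m k x = (⇑(X.t m))^[k] x := by
  induction k with
  | zero => rfl
  | succ k ih => simp [tpow, ih, Function.iterate_succ_apply']

lemma sCh_apply (m : ℕ) (x : X.C m) :
    X.sCh m x = ∑ k ∈ Finset.range p, (⇑(X.t m))^[k] x := by
  simp [sCh, tpow_apply]

lemma t_sCh (m : ℕ) (x : X.C m) : X.t m (X.sCh m x) = X.sCh m x := by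
  rw [sCh_apply, map_sum]
  simp only [← Function.iterate_succ_apply']
  rw [Finset.sum_range_iterate_succ_of_iterate_eq _ _ _ (X.t_pow m x), ← sCh_apply]

lemma sCh_t (m : ℕ) (x : X.C m) : X.sCh m (X.t m x) = X.sCh m x := by
  rw [sCh_apply, sCh_apply]
  simp only [← Function.iterate_succ_apply]
  exact Finset.sum_range_iterate_succ_of_iterate_eq _ _ _ (X.t_pow m x)

lemma sCh_dCh (m : ℕ) (x : X.C m) : X.sCh m (X.dCh m x) = 0 := by
  change X.sCh m (x - X.t m x) = 0
  rw [map_sub, sCh_t, sub_self]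

lemma sCh_sCh (m : ℕ) (x : X.C m) : X.sCh m (X.sCh m x) = p • X.sCh m x := by
  have hfix (k : ℕ) : (⇑(X.t m))^[k] (X.sCh m x) = X.sCh m x :=
    Function.iterate_fixed (X.t_sCh m x) k
  simp [X.sCh_apply m (X.sCh m x), hfix]

lemma dCo_sCo (m : ℕ) (f : X.Co m) : X.dCo m (X.sCo m f) = 0 := by
  ext x
  change f (X.sCh m (X.dCh m x)) = 0
  rw [sCh_dCh, map_zero]

lemma sCo_sCo (m : ℕ) (f : X.Co m) : X.sCo m (X.sCo m f) = p • X.sCo m f := by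
  ext x
  change f (X.sCh m (X.sCh m x)) = (p • X.sCo m f) x
  rw [sCh_sCh, map_nsmul]
  rfl

@[simp]
lemma castCoX_self {m : ℕ} (h : m = m) (f : X.Co m) : X.castCoX h f = f := rfl

variable {X} {φ ψ : ∀ j, X.Co (j + 1)} {k : ℕ} {η : X.Co (k + 3)} {b : X.Co (k + 2)}

lemma IsRes.of_sCo_top (hres : X.IsRes φ) (hk : Even k)
    (hη : X.cb (k + 3) (X.sCo (k + 3) η) = 0)
    (hb : X.sCo (k + 3) (φ (k + 2)) - p • X.sCo (k + 3) η = X.cb (k + 2) (X.sCo (k + 2) b))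
    (hψ_le : ∀ j ≤ k, ψ j = φ j) (hψ_pred : ψ (k + 1) = φ (k + 1) - X.sCo (k + 2) b)
    (hψ_top : ψ (k + 2) = X.sCo (k + 3) η) (hψ_gt : ∀ j, k + 2 < j → ψ j = 0) :
    X.IsRes ψ := by
  obtain ⟨hres_zero, hres_even, hres_odd⟩ := hres
  refine ⟨hψ_le 0 k.zero_le ▸ hres_zero, fun j hj => ?_, fun j hj => ?_⟩
  · obtain hlt | rfl | rfl | hgt : j < k ∨ j = k ∨ j = k + 2 ∨ k + 2 < j := by
      rcases hj with ⟨a, rfl⟩; rcases hk with ⟨c, rfl⟩; omega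
    · rw [hψ_le j hlt.le, hψ_le (j + 1) hlt]
      exact hres_even j hj
    · rw [hψ_le j le_rfl, hψ_pred, map_sub, dCo_sCo, sub_zero]
      exact hres_even j hj
    · rw [hψ_top, hψ_gt (k + 3) (by omega), map_zero]
      exact hη
    · rw [hψ_gt j hgt, hψ_gt (j + 1) (by omega), map_zero, map_zero]
  · obtain hlt | rfl | hgt : j + 1 ≤ k ∨ j = k + 1 ∨ k + 2 < j := by
      rcases hj with ⟨a, rfl⟩; rcases hk with ⟨c, rfl⟩; omega
    · rw [hψ_le j (by omega), hψ_le (j + 1) hlt]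
      exact hres_odd j hj
    · rw [hψ_pred, hψ_top, map_sub, hres_odd (k + 1) hj, sCo_sCo, ← hb]
      abel
    · rw [hψ_gt j hgt, hψ_gt (j + 1) (by omega), map_zero, map_zero]

end AugComplex

open AugComplex

/-- **Normal form of a resolution when the top Smith class is `p`-divisible.**
Let `C` be an augmented `ℤ_p`-chain complex, `φ_j` a resolution of `1` for `C`, and let
`n ≥ 2` be even.  Suppose there are cochains `η ∈ C^n` and `b ∈ C^{n−1}` such that
`δ(sη) = 0` and `sφ_n − p·(sη) = δ(sb)`.  Then the sequence `φ̃_j` defined by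
`φ̃_j = φ_j` for `j < n−1`, `φ̃_{n−1} = φ_{n−1} − sb`, `φ̃_n = sη`, and `φ̃_j = 0` for
all `j > n`, is a resolution of `1` for `C`. -/
theorem resolution_with_s_cocycle_top_term
    (p : ℕ) (X : AugComplex p)
    (φ : ∀ j, X.Co (j + 1)) (hres : X.IsRes φ)
    (n : ℕ) (hn : 2 ≤ n) (hne : Even n)
    (η : X.Co (n + 1)) (b : X.Co n)
    (hη : X.cb (n + 1) (X.sCo (n + 1) η) = 0)
    (hb : X.sCo (n + 1) (φ n) - p • X.sCo (n + 1) η = X.cb n (X.sCo n b)) :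
    X.IsRes (fun j =>
      if j < n - 1 then φ j
      else if hj : j = n - 1 then
        X.castCoX (by omega) (φ (n - 1)) -
          X.castCoX (by omega) (X.sCo n b)
      else if hj' : j = n then
        X.castCoX (by omega) (X.sCo (n + 1) η)
      else 0) := by
  obtain ⟨k, rfl⟩ : ∃ k, n = k + 2 := ⟨n - 2, by omega⟩
  have hk : Even k := by simpa [Nat.even_add] using hne
  refine hres.of_sCo_top hk hη hb (fun j hj => ?_) ?_ ?_ (fun j hj => ?_)
  · simp [show j < k + 1 by omega]
  · simp
  · simp
  · simp [show ¬ j < k + 1 by omega, show j ≠ k + 1 by omega, show j ≠ k + 2 by omega]
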